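/- Let G and G* be finite weighted graphs that coincide except for a single edge e = {v1,v2} (e may be present in exactly one of the two graphs, or present in both with different weights; all other vertices, edges and weights agree, and v1, v2 are vertices of both graphs). Let L > 0. If p is a shortest path in G between vertices u and w of length at most L that contains at least one vertex lying outside B_G(v1,2L) ∪ B_G(v2,2L), then p is also a shortest path in G* between u and w, of the same length. -/

import Mathlib

open SimpleGraph

/-- The length (total weight) of a walk under an edge-weight function `w`. -/
noncomputable def wlen {V : Type*} {G : SimpleGraph V} (w : Sym2 V → ℝ) {u v : V}
    (p : G.Walk u v) : ℝ :=
  (p.edges.map w).sum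

/-- Shortest-path distance as the infimum of walk lengths. -/
noncomputable def wdist {V : Type*} (G : SimpleGraph V) (w : Sym2 V → ℝ) (u v : V) : ℝ :=
  sInf {x : ℝ | ∃ p : G.Walk u v, x = wlen w p}

/-
A path `p` of length at most `L` through a vertex `y` at distance more than `2L` from `v₁` and
`v₂` cannot pass through `v₁` or `v₂`, so it avoids the changed edge and survives unchanged in
`G*`. A competing walk `q` of `G*` that avoids the changed edge is a walk of `G`, hence no
shorter than `p`. One that uses it first reaches an endpoint `z` of that edge along a prefix
which is a walk of `G`; following this prefix back and then `p` to `y` shows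
`2L < d_G(z, y) ≤ len q + L`, so `q` is longer than `L ≥ len p`.
-/

section Weighted

variable {V : Type*} {G H : SimpleGraph V} {w w' : Sym2 V → ℝ}

lemma wlen_nonneg (hw : ∀ e ∈ G.edgeSet, 0 ≤ w e) {a b : V} (p : G.Walk a b) :
    0 ≤ wlen w p :=
  List.sum_nonneg fun _ ht => by
    obtain ⟨e, he, rfl⟩ := List.mem_map.mp ht
    exact hw e (p.edges_subset_edgeSet he)

lemma wdist_le_wlen (hw : ∀ e ∈ G.edgeSet, 0 ≤ w e) {a b : V} (p : G.Walk a b) :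
    wdist G w a b ≤ wlen w p :=
  csInf_le ⟨0, fun _ ⟨q, hq⟩ => hq ▸ wlen_nonneg hw q⟩ ⟨p, rfl⟩

@[simp]
lemma wlen_append {a b c : V} (p : G.Walk a b) (q : G.Walk b c) :
    wlen w (p.append q) = wlen w p + wlen w q := by
  simp [wlen, Walk.edges_append]

@[simp]
lemma wlen_reverse {a b : V} (p : G.Walk a b) : wlen w p.reverse = wlen w p := by
  simp [wlen, Walk.edges_reverse, List.sum_reverse]

lemma wlen_takeUntil_le [DecidableEq V] (hw : ∀ e ∈ G.edgeSet, 0 ≤ w e) {a b c : V}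
    (p : G.Walk a b) (hc : c ∈ p.support) : wlen w (p.takeUntil c hc) ≤ wlen w p := by
  calc wlen w (p.takeUntil c hc)
      ≤ wlen w (p.takeUntil c hc) + wlen w (p.dropUntil c hc) :=
        le_add_of_nonneg_right (wlen_nonneg hw _)
    _ = wlen w p := by rw [← wlen_append, p.take_spec hc]

lemma wdist_le_wlen_add_wlen (hw : ∀ e ∈ G.edgeSet, 0 ≤ w e) {z a b y : V}
    (r : G.Walk z a) (p : G.Walk a b) (hy : y ∈ p.support) :
    wdist G w z y ≤ wlen w r + wlen w p := by
  classical
  calc wdist G w z y ≤ wlen w (r.append (p.takeUntil y hy)) := wdist_le_wlen hw _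
    _ ≤ wlen w r + wlen w p := by simpa using wlen_takeUntil_le hw p hy

lemma wdist_le_two_mul_wlen (hw : ∀ e ∈ G.edgeSet, 0 ≤ w e) {a b v y : V}
    (p : G.Walk a b) (hv : v ∈ p.support) (hy : y ∈ p.support) :
    wdist G w v y ≤ 2 * wlen w p := by
  classical
  calc wdist G w v y ≤ wlen w (p.takeUntil v hv).reverse + wlen w p :=
        wdist_le_wlen_add_wlen hw _ p hy
    _ ≤ 2 * wlen w p := by rw [wlen_reverse]; linarith [wlen_takeUntil_le hw p hv]

lemma exists_transfer_wlen_eq {e : Sym2 V}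
    (hagree : ∀ f ∈ G.edgeSet, f ≠ e → f ∈ H.edgeSet ∧ w' f = w f)
    {a b : V} (p : G.Walk a b) (hp : e ∉ p.edges) :
    ∃ hH : ∀ f ∈ p.edges, f ∈ H.edgeSet, wlen w' (p.transfer H hH) = wlen w p := by
  have hne : ∀ f ∈ p.edges, f ≠ e := fun f hf hfe => hp (hfe ▸ hf)
  refine ⟨fun f hf => (hagree f (p.edges_subset_edgeSet hf) (hne f hf)).1, ?_⟩
  simp only [wlen, Walk.edges_transfer]
  exact congrArg List.sum <| List.map_congr_left fun f hf =>
    (hagree f (p.edges_subset_edgeSet hf) (hne f hf)).2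

end Weighted

lemma SimpleGraph.Walk.exists_append_eq_of_mem_edges {V : Type*} {G : SimpleGraph V}
    {e : Sym2 V} {a b : V} (q : G.Walk a b) (he : e ∈ q.edges) :
    ∃ z ∈ e, ∃ (q₁ : G.Walk a z) (q₂ : G.Walk z b), e ∉ q₁.edges ∧ q₁.append q₂ = q := by
  induction q with
  | nil => simp at he
  | @cons a c b h q ih =>
    by_cases ha : a ∈ e
    · exact ⟨a, ha, nil, cons h q, by simp, rfl⟩
    · have hne : e ≠ s(a, c) := fun hac => ha (hac ▸ Sym2.mem_mk_left a c)
      obtain ⟨z, hz, q₁, q₂, hq₁, rfl⟩ := ih (by simpa [hne] using he)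
      exact ⟨z, hz, cons h q₁, q₂, by simpa [hq₁] using hne, rfl⟩

theorem stmt15_general {V : Type}
    (G Gs : SimpleGraph V) (w ws : Sym2 V → ℝ)
    (hwpos : ∀ e ∈ G.edgeSet, 0 < w e) (hwspos : ∀ e ∈ Gs.edgeSet, 0 < ws e)
    (v1 v2 : V)
    (hsame : ∀ a b : V, s(a, b) ≠ s(v1, v2) →
      ((G.Adj a b ↔ Gs.Adj a b) ∧ w s(a, b) = ws s(a, b)))
    (L : ℝ)
    (u x : V) (p : G.Walk u x)
    (hpshort : ∀ q : G.Walk u x, wlen w p ≤ wlen w q)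
    (hplen : wlen w p ≤ L)
    (hout : ∃ y ∈ p.support,
      y ∉ {z : V | wdist G w v1 z ≤ 2 * L} ∪ {z : V | wdist G w v2 z ≤ 2 * L}) :
    ∃ hedges : ∀ e ∈ p.edges, e ∈ Gs.edgeSet,
      wlen ws (p.transfer Gs hedges) = wlen w p ∧
      ∀ q : Gs.Walk u x, wlen ws (p.transfer Gs hedges) ≤ wlen ws q := by
  have hw : ∀ e ∈ G.edgeSet, 0 ≤ w e := fun e he => (hwpos e he).le
  have hws : ∀ e ∈ Gs.edgeSet, 0 ≤ ws e := fun e he => (hwspos e he).le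
  obtain ⟨y, hy, hyfar⟩ := hout
  have hfar : ∀ z ∈ s(v1, v2), 2 * L < wdist G w z y := by
    simp only [Set.mem_union, Set.mem_ofPred_eq, not_or, not_le] at hyfar
    intro z hz
    rcases Sym2.mem_iff.mp hz with rfl | rfl
    exacts [hyfar.1, hyfar.2]
  have hGGs : ∀ f ∈ G.edgeSet, f ≠ s(v1, v2) → f ∈ Gs.edgeSet ∧ ws f = w f :=
    Sym2.ind fun a b hG hne => ⟨(hsame a b hne).1.mp hG, (hsame a b hne).2.symm⟩
  have hGsG : ∀ f ∈ Gs.edgeSet, f ≠ s(v1, v2) → f ∈ G.edgeSet ∧ w f = ws f :=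
    Sym2.ind fun a b hGs hne => ⟨(hsame a b hne).1.mpr hGs, (hsame a b hne).2⟩
  have hpavoid : s(v1, v2) ∉ p.edges := fun he => by
    have := wdist_le_two_mul_wlen hw p (p.fst_mem_support_of_mem_edges he) hy
    linarith [hfar v1 (Sym2.mem_mk_left v1 v2)]
  obtain ⟨hedges, hlen⟩ := exists_transfer_wlen_eq hGGs p hpavoid
  refine ⟨hedges, hlen, fun q => hlen ▸ ?_⟩
  by_cases hq : s(v1, v2) ∈ q.edges
  · obtain ⟨z, hz, q₁, q₂, hq₁, rfl⟩ := q.exists_append_eq_of_mem_edges hq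
    obtain ⟨hq₁G, hlen₁⟩ := exists_transfer_wlen_eq hGsG q₁ hq₁
    have := wdist_le_wlen_add_wlen hw (q₁.transfer G hq₁G).reverse p hy
    rw [wlen_reverse, hlen₁] at this
    rw [wlen_append]
    linarith [hfar z hz, wlen_nonneg hws q₂]
  · obtain ⟨hqG, hlenq⟩ := exists_transfer_wlen_eq hGsG q hq
    exact hlenq ▸ hpshort _

/-- A shortest path of `G` of length at most `L` containing a
vertex outside `B_G(v1,2L) ∪ B_G(v2,2L)` is also a shortest path, of the same
length, in the graph `G*` obtained by changing only the edge `{v1,v2}`. -/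
theorem stmt15 {V : Type} [Fintype V]
    (G Gs : SimpleGraph V) (w ws : Sym2 V → ℝ)
    (hGconn : G.Connected) (hGsconn : Gs.Connected)
    (hwpos : ∀ e ∈ G.edgeSet, 0 < w e) (hwspos : ∀ e ∈ Gs.edgeSet, 0 < ws e)
    (huniqG : ∀ (a b : V) (p q : G.Walk a b), p.IsPath → q.IsPath →
      (∀ z : G.Walk a b, wlen w p ≤ wlen w z) →
      (∀ z : G.Walk a b, wlen w q ≤ wlen w z) → p = q)
    (huniqGs : ∀ (a b : V) (p q : Gs.Walk a b), p.IsPath → q.IsPath →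
      (∀ z : Gs.Walk a b, wlen ws p ≤ wlen ws z) →
      (∀ z : Gs.Walk a b, wlen ws q ≤ wlen ws z) → p = q)
    (v1 v2 : V)
    (hsame : ∀ a b : V, s(a, b) ≠ s(v1, v2) →
      ((G.Adj a b ↔ Gs.Adj a b) ∧ w s(a, b) = ws s(a, b)))
    (L : ℝ) (hL : 0 < L)
    (u x : V) (p : G.Walk u x) (hp : p.IsPath)
    (hpshort : ∀ q : G.Walk u x, wlen w p ≤ wlen w q)
    (hplen : wlen w p ≤ L)
    (hout : ∃ y ∈ p.support,
      y ∉ {z : V | wdist G w v1 z ≤ 2 * L} ∪ {z : V | wdist G w v2 z ≤ 2 * L}) :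
    ∃ hedges : ∀ e ∈ p.edges, e ∈ Gs.edgeSet,
      wlen ws (p.transfer Gs hedges) = wlen w p ∧
      ∀ q : Gs.Walk u x, wlen ws (p.transfer Gs hedges) ≤ wlen ws q :=
  stmt15_general G Gs w ws hwpos hwspos v1 v2 hsame L u x p hpshort hplen hout
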